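/- Let P be a locally finite poset and k a field of characteristic 0. For f ∈ C^p(P;k) (p ≥ 1) and g_1 ∈ C^{q_1}(P;k), …, g_p ∈ C^{q_p}(P;k) with all q_t ≥ 1, the map Φ intertwines the full operadic compositions: Φ(γ(f; g_1,…,g_p)) = γ(Φf; Φg_1,…,Φg_p), where on simplicial cochains γ(f; g_1,…,g_p)(i_0,…,i_{q_1+⋯+q_p}) = f(i_0, i_{q_1}, i_{q_1+q_2}, …, i_{q_1+⋯+q_p}) · g_1(i_0,…,i_{q_1}) · g_2(i_{q_1},…,i_{q_1+q_2}) ⋯ g_p(i_{q_1+⋯+q_{p−1}},…,i_{q_1+⋯+q_p}), and on multilinear maps γ(F; G_1,…,G_p)(a_1,…,a_{q_1+⋯+q_p}) = F(G_1(a_1,…,a_{q_1}), …, G_p(a_{q_1+⋯+q_{p−1}+1},…,a_{q_1+⋯+q_p})). -/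

import Mathlib

/-!
STATEMENT 9: `Φ` intertwines the full operadic compositions:
`Φ(γ(f; g_1, …, g_p)) = γ(Φf; Φg_1, …, Φg_p)`.
-/

open Finset

section Offsets

/-- The offset `q 0 + q 1 + ⋯ + q (t-1)` (sum of the first `t` arities). -/
def off {p : ℕ} (q : Fin p → ℕ) (t : ℕ) : ℕ :=
  ∑ u ∈ Finset.univ.filter fun u : Fin p => (u : ℕ) < t, q u

lemma off_le {p : ℕ} (q : Fin p → ℕ) (t : ℕ) : off q t ≤ ∑ u, q u :=
  Finset.sum_le_sum_of_subset (Finset.filter_subset _ _)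

lemma off_mono {p : ℕ} (q : Fin p → ℕ) {s t : ℕ} (h : s ≤ t) : off q s ≤ off q t := by
  classical
  refine Finset.sum_le_sum_of_subset fun u hu => ?_
  simp only [Finset.mem_filter, Finset.mem_univ, true_and] at hu ⊢
  omega

lemma off_succ {p : ℕ} (q : Fin p → ℕ) (t : Fin p) :
    off q ((t : ℕ) + 1) = off q (t : ℕ) + q t := by
  classical
  have h : (Finset.univ.filter fun u : Fin p => (u : ℕ) < (t : ℕ) + 1) =
      insert t (Finset.univ.filter fun u : Fin p => (u : ℕ) < (t : ℕ)) := by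
    ext u
    simp only [Finset.mem_filter, Finset.mem_univ, true_and, Finset.mem_insert, Fin.ext_iff]
    omega
  rw [off, h, Finset.sum_insert (by simp), off]
  ring

end Offsets

/-- The Hochschild operadic composition
`γ(F; G_1, …, G_p)(a_1, …, a_{q_1+⋯+q_p}) = F(G_1(a_1, …, a_{q_1}), …)`. -/
def hGamma {A : Type*} (p : ℕ) (q : Fin p → ℕ) (F : (Fin p → A) → A)
    (G : ∀ t, (Fin (q t) → A) → A) : (Fin (∑ t, q t) → A) → A :=
  fun a => F fun t => G t fun s =>
    a ⟨off q t + (s : ℕ), by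
        have h1 := off_succ q t
        have h2 := off_le q ((t : ℕ) + 1)
        omega⟩

section Incidence
variable (k : Type*) [Field k] (P : Type*) [PartialOrder P] [LocallyFiniteOrder P]
  [DecidableEq P]

/-- A chain (simplex) of length `n` in the poset `P`: a monotone `(n+1)`-tuple. -/
abbrev SChain (n : ℕ) := {c : Fin (n + 1) → P // Monotone c}

open scoped Classical in
/-- The finset of monotone `(n+1)`-tuples from `x` to `y`. -/
noncomputable def chainTuples (n : ℕ) (x y : P) : Finset (Fin (n + 1) → P) :=
  (Fintype.piFinset fun _ => Finset.Icc x y).filter fun c =>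
    Monotone c ∧ c 0 = x ∧ c (Fin.last n) = y

lemma chainTuples_mono {n : ℕ} {x y : P} {c : Fin (n + 1) → P}
    (hc : c ∈ chainTuples P n x y) : Monotone c := by
  classical
  simp only [chainTuples, Finset.mem_filter] at hc
  exact hc.2.1

lemma le_of_mem_chainTuples {n : ℕ} {x y : P} {c : Fin (n + 1) → P}
    (hc : c ∈ chainTuples P n x y) : x ≤ y := by
  classical
  simp only [chainTuples, Finset.mem_filter] at hc
  exact hc.2.2.1 ▸ hc.2.2.2 ▸ hc.2.1 (Fin.zero_le _)

/-- The map `Φ` from simplicial `n`-cochains on `P` to Hochschild `n`-cochains of `kP`: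
`(Φf)(a_1, …, a_n)(x, y) = ∑_{x = i₀ ≤ ⋯ ≤ iₙ = y} f(i₀, …, iₙ)·a_1(i₀,i₁)⋯aₙ(i_{n-1},iₙ)`. -/
noncomputable def Phi (n : ℕ) (f : SChain P n → k) (a : Fin n → IncidenceAlgebra k P) :
    IncidenceAlgebra k P :=
  ⟨fun x y => ∑ c ∈ (chainTuples P n x y).attach,
      f ⟨c.1, chainTuples_mono P c.2⟩ * ∏ t : Fin n, a t (c.1 t.castSucc) (c.1 t.succ),
   fun x y hxy => by
    exact Finset.sum_eq_zero fun c _ => absurd (le_of_mem_chainTuples P c.2) hxy⟩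

end Incidence

section Simplicial
variable (k : Type*) [Field k] (P : Type*) [PartialOrder P]

/-- The simplicial operadic composition
`γ(f; g_1, …, g_p)(i_0, …, i_N) = f(i_0, i_{q_1}, i_{q_1+q_2}, …, i_N) ⬝ ∏_t g_t(…)`. -/
def sGamma (p : ℕ) (q : Fin p → ℕ) (f : SChain P p → k) (g : ∀ t, SChain P (q t) → k) :
    SChain P (∑ t, q t) → k :=
  fun c =>
    f ⟨fun t => c.1 ⟨off q t, by have := off_le q (t : ℕ); omega⟩,
       c.2.comp (by
         intro s t hst
         have hst' : (s : ℕ) ≤ (t : ℕ) := hst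
         simp only [Fin.mk_le_mk]
         exact off_mono q hst')⟩ *
    ∏ t : Fin p,
      g t ⟨fun s => c.1 ⟨off q t + (s : ℕ), by
              have h1 := off_succ q t
              have h2 := off_le q ((t : ℕ) + 1)
              omega⟩,
            c.2.comp (by
              intro s s' hss'
              have hss'' : (s : ℕ) ≤ (s' : ℕ) := hss'
              simp only [Fin.mk_le_mk]
              omega)⟩

end Simplicial

/-!
Expanding the products of sums on the right, both sides are sums over chains. Cutting a
chain `x = i₀ ≤ ⋯ ≤ i_N = y` at the offsets `q₁ + ⋯ + q_t` is a bijection onto pairs of a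
coarse chain `x = d₀ ≤ ⋯ ≤ d_p = y` and chains of lengths `q_t` from `d_{t-1}` to `d_t`,
matching the terms of the two sums.
-/

section Blocks

variable {p : ℕ} (q : Fin p → ℕ)

lemma off_zero : off q 0 = 0 := by
  simp [off]

lemma off_top : off q p = ∑ u, q u := by
  rw [off, filter_true_of_mem fun u _ => u.isLt]

lemma off_add_le (t : Fin p) {s : ℕ} (hs : s ≤ q t) : off q t + s ≤ ∑ u, q u := by
  have := off_succ q t
  have := off_le q ((t : ℕ) + 1)
  omega

lemma off_eq_sum_castLE (t : Fin p) :
    off q t = ∑ i : Fin t, q (Fin.castLE t.isLt.le i) := by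
  have h : univ.filter (fun u : Fin p => (u : ℕ) < t) = univ.map (Fin.castLEEmb t.isLt.le) := by
    ext u
    simp only [mem_filter, mem_univ, true_and, mem_map, Fin.castLEEmb_apply]
    exact ⟨fun h => ⟨⟨u, h⟩, rfl⟩, by rintro ⟨i, -, rfl⟩; exact i.isLt⟩
  rw [off, h, sum_map]
  rfl

lemma val_finSigmaFinEquiv (t : Fin p) (s : Fin (q t)) :
    (finSigmaFinEquiv ⟨t, s⟩ : ℕ) = off q t + s := by
  rw [finSigmaFinEquiv_apply, off_eq_sum_castLE]

lemma finSigmaFinEquiv_symm_off_add (t : Fin p) (s : Fin (q t)) (h : off q t + s < ∑ u, q u) :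
    finSigmaFinEquiv.symm ⟨off q t + s, h⟩ = ⟨t, s⟩ :=
  Equiv.symm_apply_eq _ |>.mpr <| Fin.ext (val_finSigmaFinEquiv q t s).symm

lemma prod_eq_prod_blocks {M : Type*} [CommMonoid M] (A : Fin (∑ t, q t) → M) :
    ∏ u, A u = ∏ t : Fin p, ∏ s : Fin (q t),
      A ⟨off q t + s, by have := off_add_le q t s.isLt; omega⟩ := by
  rw [← Fintype.prod_equiv finSigmaFinEquiv _ A fun _ => rfl, ← univ_sigma_univ, prod_sigma]
  exact prod_congr rfl fun t _ => prod_congr rfl fun s _ =>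
    congrArg A (Fin.ext (val_finSigmaFinEquiv q t s))

end Blocks

section Chains

variable {P : Type*} [PartialOrder P]

open scoped Classical in
noncomputable def extendByZero {k : Type*} [Zero k] {n : ℕ} (f : SChain P n → k)
    (c : Fin (n + 1) → P) : k :=
  if h : Monotone c then f ⟨c, h⟩ else 0

lemma extendByZero_of_monotone {k : Type*} [Zero k] {n : ℕ} (f : SChain P n → k)
    {c : Fin (n + 1) → P} (h : Monotone c) : extendByZero f c = f ⟨c, h⟩ :=
  dif_pos h

variable [LocallyFiniteOrder P] [DecidableEq P]

lemma mem_chainTuples {n : ℕ} {x y : P} {c : Fin (n + 1) → P} :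
    c ∈ chainTuples P n x y ↔ Monotone c ∧ c 0 = x ∧ c (Fin.last n) = y := by
  simp only [chainTuples, mem_filter, Fintype.mem_piFinset, mem_Icc, and_iff_right_iff_imp]
  rintro ⟨hc, rfl, rfl⟩ i
  exact ⟨hc (Fin.zero_le i), hc (Fin.le_last i)⟩

lemma Phi_apply {k : Type*} [Field k] (n : ℕ) (f : SChain P n → k)
    (a : Fin n → IncidenceAlgebra k P) (x y : P) :
    Phi k P n f a x y = ∑ c ∈ chainTuples P n x y,
      extendByZero f c * ∏ t : Fin n, a t (c t.castSucc) (c t.succ) := by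
  rw [← sum_attach]
  exact sum_congr rfl fun c _ => by rw [extendByZero_of_monotone f (mem_chainTuples.mp c.2).1]

end Chains

section Splitting

variable {P : Type*} {p : ℕ} (q : Fin p → ℕ)

def coarseChain (c : Fin (∑ t, q t + 1) → P) (t : Fin (p + 1)) : P :=
  c ⟨off q t, Nat.lt_succ_of_le (off_le q t)⟩

def blockChain (c : Fin (∑ t, q t + 1) → P) (t : Fin p) (s : Fin (q t + 1)) : P :=
  c ⟨off q t + s, Nat.lt_succ_of_le (off_add_le q t (Nat.le_of_lt_succ s.isLt))⟩

noncomputable def glue (d : Fin (p + 1) → P) (γ : ∀ t, Fin (q t + 1) → P)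
    (v : Fin (∑ t, q t + 1)) : P :=
  if h : (v : ℕ) < ∑ t, q t then
    γ (finSigmaFinEquiv.symm ⟨v, h⟩).1 (finSigmaFinEquiv.symm ⟨v, h⟩).2.castSucc
  else d (Fin.last p)

variable {q} {c : Fin (∑ t, q t + 1) → P}

lemma Monotone.coarseChain [Preorder P] (hc : Monotone c) : Monotone (coarseChain q c) :=
  fun _ _ h => hc (Fin.mk_le_mk.mpr (off_mono q h))

lemma Monotone.blockChain [Preorder P] (hc : Monotone c) (t : Fin p) :
    Monotone (blockChain q c t) :=
  fun _ _ h => hc (Fin.mk_le_mk.mpr (Nat.add_le_add_left h _))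

lemma glue_coarseChain_blockChain : glue q (coarseChain q c) (blockChain q c) = c := by
  funext v
  by_cases hv : (v : ℕ) < ∑ t, q t
  · rw [glue, dif_pos hv]
    exact congrArg c <| Fin.ext <| by simp [← val_finSigmaFinEquiv]
  · rw [glue, dif_neg hv, coarseChain]
    exact congrArg c <| Fin.ext <| by simp only [Fin.val_last, off_top]; omega

variable {d : Fin (p + 1) → P} {γ : ∀ t, Fin (q t + 1) → P}

lemma glue_off_add_castSucc (t : Fin p) (s : Fin (q t)) :
    glue q d γ ⟨off q t + s, Nat.lt_succ_of_le (off_add_le q t s.isLt.le)⟩ =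
      γ t s.castSucc := by
  have h : off q t + s < ∑ u, q u := by have := off_add_le q t s.isLt; omega
  rw [glue, dif_pos h, finSigmaFinEquiv_symm_off_add q t s h]

/-- `glue` reads the end of block `t` off the start of block `t + 1` (or off the endpoint of
`d`), which agree with it. -/
lemma glue_off_add (hq : ∀ t, 1 ≤ q t) (h0 : ∀ t, γ t 0 = d t.castSucc)
    (hlast : ∀ t, γ t (Fin.last (q t)) = d t.succ) (t : Fin p) (s : Fin (q t + 1)) :
    glue q d γ ⟨off q t + s, Nat.lt_succ_of_le (off_add_le q t (Nat.le_of_lt_succ s.isLt))⟩ =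
      γ t s := by
  obtain ⟨s, rfl⟩ | rfl := Fin.eq_castSucc_or_eq_last s
  · exact glue_off_add_castSucc t s
  rw [hlast]
  have hsucc := off_succ q t
  by_cases ht : (t : ℕ) + 1 < p
  · have := glue_off_add_castSucc (d := d) (γ := γ) ⟨t + 1, ht⟩ ⟨0, hq _⟩
    rw [Fin.castSucc_mk, Fin.zero_eta, h0] at this
    convert this using 2 <;> simp [Fin.ext_iff, hsucc]
  · have htp : (t : ℕ) + 1 = p := by omega
    have htop : off q ((t : ℕ) + 1) = ∑ u, q u := (congrArg (off q) htp).trans (off_top q)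
    rw [glue, dif_neg (by simp only [Fin.val_last]; omega)]
    exact congrArg d (Fin.ext (by simp [htp]))

lemma coarseChain_glue (hq : ∀ t, 1 ≤ q t) (h0 : ∀ t, γ t 0 = d t.castSucc)
    (hlast : ∀ t, γ t (Fin.last (q t)) = d t.succ) : coarseChain q (glue q d γ) = d := by
  funext t
  obtain ⟨t, rfl⟩ | rfl := Fin.eq_castSucc_or_eq_last t
  · rw [coarseChain]
    simpa [h0] using glue_off_add hq h0 hlast t 0
  · rw [coarseChain, glue, dif_neg (by simp [off_top])]

lemma blockChain_glue (hq : ∀ t, 1 ≤ q t) (h0 : ∀ t, γ t 0 = d t.castSucc)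
    (hlast : ∀ t, γ t (Fin.last (q t)) = d t.succ) : blockChain q (glue q d γ) = γ := by
  funext t s
  exact glue_off_add hq h0 hlast t s

end Splitting

section Bijection

variable {P : Type*} [PartialOrder P] [LocallyFiniteOrder P] [DecidableEq P] {p : ℕ}
  {q : Fin p → ℕ} {x y : P}

lemma coarseChain_mem {c : Fin (∑ t, q t + 1) → P} (hc : c ∈ chainTuples P (∑ t, q t) x y) :
    coarseChain q c ∈ chainTuples P p x y := by
  obtain ⟨hm, h0, hlast⟩ := mem_chainTuples.mp hc
  refine mem_chainTuples.mpr ⟨hm.coarseChain, ?_, ?_⟩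
  · rw [← h0]
    exact congrArg c (Fin.ext (by simp [off_zero]))
  · rw [← hlast]
    exact congrArg c (Fin.ext (by simp [off_top]))

lemma blockChain_mem {c : Fin (∑ t, q t + 1) → P} (hc : Monotone c) (t : Fin p) :
    blockChain q c t ∈
      chainTuples P (q t) (coarseChain q c t.castSucc) (coarseChain q c t.succ) :=
  mem_chainTuples.mpr ⟨hc.blockChain t, congrArg c (Fin.ext (by simp)),
    congrArg c (Fin.ext (by simp [off_succ]))⟩

lemma glue_mem (hq : ∀ t, 1 ≤ q t) {d : Fin (p + 1) → P} {γ : ∀ t, Fin (q t + 1) → P}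
    (hd : d ∈ chainTuples P p x y)
    (hγ : ∀ t, γ t ∈ chainTuples P (q t) (d t.castSucc) (d t.succ)) :
    glue q d γ ∈ chainTuples P (∑ t, q t) x y := by
  have h0 t := (mem_chainTuples.mp (hγ t)).2.1
  have hlast t := (mem_chainTuples.mp (hγ t)).2.2
  have hcoarse := congrFun (coarseChain_glue hq h0 hlast)
  refine mem_chainTuples.mpr ⟨Fin.monotone_iff_le_succ.mpr fun u => ?_, ?_, ?_⟩
  · obtain ⟨⟨t, s⟩, rfl⟩ := finSigmaFinEquiv.surjective u
    have hu := val_finSigmaFinEquiv q t s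
    calc glue q d γ (finSigmaFinEquiv ⟨t, s⟩).castSucc = γ t s.castSucc := by
          rw [← glue_off_add hq h0 hlast t s.castSucc]; congr 1; ext; simp [hu]
      _ ≤ γ t s.succ := (mem_chainTuples.mp (hγ t)).1 (Fin.castSucc_le_succ s)
      _ = glue q d γ (finSigmaFinEquiv ⟨t, s⟩).succ := by
          rw [← glue_off_add hq h0 hlast t s.succ]; congr 1; ext; simp [hu, add_assoc]
  · rw [← (mem_chainTuples.mp hd).2.1, ← hcoarse]
    exact congrArg _ (Fin.ext (by simp [off_zero]))
  · rw [← (mem_chainTuples.mp hd).2.2, ← hcoarse]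
    exact congrArg _ (Fin.ext (by simp [off_top]))

lemma sum_sigma_chainTuples (hq : ∀ t, 1 ≤ q t) {M : Type*} [AddCommMonoid M]
    (G : (Σ _ : Fin (p + 1) → P, ∀ t, Fin (q t + 1) → P) → M) :
    ∑ z ∈ (chainTuples P p x y).sigma
        (fun d => Fintype.piFinset fun t => chainTuples P (q t) (d t.castSucc) (d t.succ)),
      G z =
    ∑ c ∈ chainTuples P (∑ t, q t) x y, G ⟨coarseChain q c, blockChain q c⟩ := by
  symm
  refine sum_nbij' (fun c => ⟨coarseChain q c, blockChain q c⟩) (fun z => glue q z.1 z.2)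
    (fun c hc => ?_) (fun z hz => ?_) (fun c _ => glue_coarseChain_blockChain)
    (fun z hz => ?_) (fun _ _ => rfl)
  · exact mem_sigma.mpr ⟨coarseChain_mem hc,
      Fintype.mem_piFinset.mpr (blockChain_mem (mem_chainTuples.mp hc).1)⟩
  · obtain ⟨hd, hγ⟩ := mem_sigma.mp hz
    exact glue_mem hq hd (Fintype.mem_piFinset.mp hγ)
  · obtain ⟨hd, hγ⟩ := mem_sigma.mp hz
    have h0 t := (mem_chainTuples.mp (Fintype.mem_piFinset.mp hγ t)).2.1
    have hlast t := (mem_chainTuples.mp (Fintype.mem_piFinset.mp hγ t)).2.2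
    exact Sigma.ext (coarseChain_glue hq h0 hlast) (heq_of_eq (blockChain_glue hq h0 hlast))

end Bijection

lemma extendByZero_sGamma {k : Type*} [Field k] {P : Type*} [PartialOrder P] {p : ℕ}
    {q : Fin p → ℕ} (f : SChain P p → k) (g : ∀ t, SChain P (q t) → k)
    {c : Fin (∑ t, q t + 1) → P} (hc : Monotone c) :
    extendByZero (sGamma k P p q f g) c =
      extendByZero f (coarseChain q c) * ∏ t, extendByZero (g t) (blockChain q c t) := by
  simp only [extendByZero_of_monotone _ hc, extendByZero_of_monotone _ hc.coarseChain,
    extendByZero_of_monotone _ (hc.blockChain _)]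
  rfl

theorem phi_intertwines_gamma_general
    (k : Type*) [Field k]
    (P : Type*) [PartialOrder P] [LocallyFiniteOrder P] [DecidableEq P]
    (p : ℕ) (q : Fin p → ℕ) (hq : ∀ t, 1 ≤ q t)
    (f : SChain P p → k) (g : ∀ t, SChain P (q t) → k) :
    Phi k P (∑ t, q t) (sGamma k P p q f g) =
      hGamma p q (Phi k P p f) (fun t => Phi k P (q t) (g t)) := by
  funext a
  ext x y
  simp only [hGamma, Phi_apply, prod_univ_sum, mul_sum]
  rw [sum_sigma', sum_sigma_chainTuples hq]
  refine sum_congr rfl fun c hc => ?_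
  rw [extendByZero_sGamma f g (mem_chainTuples.mp hc).1, prod_eq_prod_blocks q, mul_assoc,
    ← prod_mul_distrib]
  rfl

theorem phi_intertwines_gamma
    (k : Type*) [Field k] [CharZero k]
    (P : Type*) [PartialOrder P] [LocallyFiniteOrder P] [DecidableEq P]
    (p : ℕ) (hp : 1 ≤ p) (q : Fin p → ℕ) (hq : ∀ t, 1 ≤ q t)
    (f : SChain P p → k) (g : ∀ t, SChain P (q t) → k) :
    Phi k P (∑ t, q t) (sGamma k P p q f g) =
      hGamma p q (Phi k P p f) (fun t => Phi k P (q t) (g t)) :=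
  phi_intertwines_gamma_general k P p q hq f g
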